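/- arXiv:2406.18498 — 5 statements merged into one kernel-verified Lean document; each statement's English description precedes it below -/
import Mathlib

section
/- For a field K and positive integer d, define N_K(d) as the least n such that for all nonzero a₁,...,aₙ ∈ K the equation a₁x₁^d + ... + aₙxₙ^d = 0 has a nonzero solution in Kⁿ (∞ if no such n exists). Then for any field K and odd d, if N_K(d) is finite and L/K is a finite field extension of degree m, and Birch's theorem holds over K (every system of m forms of odd degree d over K in sufficiently many variables has a nonzero solution), then N_L(d) is finite. -/
/-!
Fix a `K`-basis `b` of `L`. For `a : Fin n → L` and `x : Fin n → K`, the sum `∑ i, a i * x i ^ d`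
equals `∑ i, x i ^ d • a i`, whose `j`-th `b`-coordinate is the diagonal degree-`d` form
`∑ i, (b.repr (a i) j) * x i ^ d` over `K`. A common nonzero zero of these `finrank K L` forms,
which Birch's theorem provides once `n` is large, is then a nonzero solution in `K^n ⊆ L^n`.
-/

open MvPolynomial

/-- `K` admits `n` such that every diagonal degree-`d` form in `n` variables with nonzero
coefficients has a nonzero solution. -/
def DiagSolvable (K : Type*) [Field K] (d n : ℕ) : Prop :=
  ∀ a : Fin n → K, (∀ i, a i ≠ 0) →
    ∃ x : Fin n → K, x ≠ 0 ∧ ∑ i, a i * x i ^ d = 0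

section Coordinates

variable {K M ι σ : Type*} [Field K] [AddCommGroup M] [Module K M] [Fintype σ]

noncomputable def diagonalCoordForm (b : Module.Basis ι K M) (a : σ → M) (d : ℕ) (j : ι) :
    MvPolynomial σ K :=
  ∑ i, C (b.repr (a i) j) * X i ^ d

theorem isHomogeneous_diagonalCoordForm (b : Module.Basis ι K M) (a : σ → M) (d : ℕ) (j : ι) :
    (diagonalCoordForm b a d j).IsHomogeneous d :=
  IsHomogeneous.sum _ _ _ fun i _ => isHomogeneous_C_mul_X_pow _ i d

theorem eval_diagonalCoordForm (b : Module.Basis ι K M) (a : σ → M) (d : ℕ) (j : ι)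
    (x : σ → K) :
    eval x (diagonalCoordForm b a d j) = b.repr (∑ i, x i ^ d • a i) j := by
  simp only [diagonalCoordForm, map_sum, eval_mul, eval_C, eval_pow, eval_X,
    map_smul, Finsupp.coe_finsetSum, Finset.sum_apply, Finsupp.smul_apply, smul_eq_mul,
    mul_comm]

theorem sum_pow_smul_eq_zero_of_eval_diagonalCoordForm (b : Module.Basis ι K M) (a : σ → M)
    (d : ℕ) (x : σ → K) (hx : ∀ j, eval x (diagonalCoordForm b a d j) = 0) :
    ∑ i, x i ^ d • a i = 0 :=
  b.repr.map_eq_zero_iff.mp <| Finsupp.ext fun j =>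
    (eval_diagonalCoordForm b a d j x).symm.trans (hx j)

end Coordinates

theorem diagSolvable_of_forms_have_common_zero (K L : Type*) [Field K] [Field L] [Algebra K L]
    [FiniteDimensional K L] (d n : ℕ)
    (hforms : ∀ f : Fin (Module.finrank K L) → MvPolynomial (Fin n) K,
      (∀ i, (f i).IsHomogeneous d) → ∃ x : Fin n → K, x ≠ 0 ∧ ∀ i, eval x (f i) = 0) :
    DiagSolvable L d n := by
  intro a _
  let b := Module.finBasis K L
  obtain ⟨x, hx0, hx⟩ := hforms (diagonalCoordForm b a d) (isHomogeneous_diagonalCoordForm b a d)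
  refine ⟨algebraMap K L ∘ x, ?_, ?_⟩
  · exact fun h => hx0 <| funext fun i => (algebraMap K L).injective (by simpa using congrFun h i)
  · calc ∑ i, a i * (algebraMap K L (x i)) ^ d = ∑ i, x i ^ d • a i :=
          Finset.sum_congr rfl fun i _ => by rw [Algebra.smul_def, map_pow, mul_comm]
      _ = 0 := sum_pow_smul_eq_zero_of_eval_diagonalCoordForm b a d x hx

theorem stmt1_general (K L : Type*) [Field K] [Field L] [Algebra K L] [FiniteDimensional K L]
    (d : ℕ)
    (hBirch : ∃ C : ℕ, ∀ n, C ≤ n →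
      ∀ f : Fin (Module.finrank K L) → MvPolynomial (Fin n) K,
        (∀ i, (f i).IsHomogeneous d) →
        ∃ x : Fin n → K, x ≠ 0 ∧ ∀ i, MvPolynomial.eval x (f i) = 0) :
    ∃ n, DiagSolvable L d n := by
  obtain ⟨C, hC⟩ := hBirch
  exact ⟨C, diagSolvable_of_forms_have_common_zero K L d C (hC C le_rfl)⟩

/-- If `N_K(d)` is finite, `L/K` is a finite extension of degree `m`, and Birch's theorem
holds over `K` for systems of `m` forms of odd degree `d`, then `N_L(d)` is finite. -/
theorem stmt1 (K L : Type*) [Field K] [Field L] [Algebra K L] [FiniteDimensional K L]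
    (d : ℕ) (hd : Odd d)
    (hNK : ∃ n, DiagSolvable K d n)
    (hBirch : ∃ C : ℕ, ∀ n, C ≤ n →
      ∀ f : Fin (Module.finrank K L) → MvPolynomial (Fin n) K,
        (∀ i, (f i).IsHomogeneous d) →
        ∃ x : Fin n → K, x ≠ 0 ∧ ∀ i, MvPolynomial.eval x (f i) = 0) :
    ∃ n, DiagSolvable L d n :=
  stmt1_general K L d hBirch
end

section
/- Let f₁,...,f_r be homogeneous forms of the same degree d on a finite-dimensional vector space V over a field K of characteristic 0, and fix ℓ ≥ 1. Consider the restriction map Res: V^ℓ → 𝒫_d(K^ℓ)^r sending (w₁,...,w_ℓ) to the tuple of polynomials (x₁,...,x_ℓ) ↦ f_i(x₁w₁ + ... + x_ℓw_ℓ). Then the collective strength of the component forms of Res (as polynomials on V^ℓ) is at least the collective strength of (f₁,...,f_r). -/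
open MvPolynomial

/-- `f` admits a decomposition `f = ∑_{i<s} g i * h i` with `g i, h i` homogeneous of
degrees strictly between `0` and `d`. -/
def HasStrengthDecomp {K : Type*} [CommRing K] {σ : Type*} (d : ℕ)
    (f : MvPolynomial σ K) (s : ℕ) : Prop :=
  ∃ (g h : Fin s → MvPolynomial σ K) (e : Fin s → ℕ),
    (∀ i, 0 < e i ∧ e i < d ∧ (g i).IsHomogeneous (e i) ∧ (h i).IsHomogeneous (d - e i)) ∧
    f = ∑ i, g i * h i

/-- The strength of a degree-`d` form, valued in `ℕ∞`. -/
noncomputable def strength {K : Type*} [CommRing K] {σ : Type*} (d : ℕ)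
    (f : MvPolynomial σ K) : ℕ∞ :=
  sInf {s : ℕ∞ | ∃ k : ℕ, s = (k : ℕ∞) ∧ HasStrengthDecomp d f k}

/-- The component `f_i^ε` of the restriction map: the coefficient of the monomial `x^ε` in
`f i (x₁ w₁ + ⋯ + x_ℓ w_ℓ)`, viewed as a polynomial in the entries of `(w₁, …, w_ℓ)`. -/
noncomputable def resComponent {K : Type*} [CommSemiring K] (N ℓ : ℕ)
    (f : MvPolynomial (Fin N) K) (ε : Fin ℓ →₀ ℕ) : MvPolynomial (Fin ℓ × Fin N) K :=
  MvPolynomial.coeff ε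
    (MvPolynomial.sumToIter K (Fin ℓ) (Fin ℓ × Fin N)
      (MvPolynomial.aeval
        (fun k : Fin N => ∑ j : Fin ℓ, X (Sum.inl j) * X (Sum.inr (j, k)) :
          Fin N → MvPolynomial (Fin ℓ ⊕ Fin ℓ × Fin N) K) f))

/-!
Restrict along `w_j = λ_j v`. Then `Σ_j x_j w_j = (Σ_j λ_j x_j) v`, so by homogeneity the
component `f_i^ε` becomes `multinomial(ε) λ^ε f_i`, and `Σ c_{(i,ε)} f_i^ε` becomes
`Σ_i a_i(λ) f_i` for polynomials `a_i` whose coefficients are the `c_{(i,ε)}` times multinomial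
coefficients. In characteristic zero some `a_i` is a nonzero polynomial, so over the infinite
field `K` some `λ` makes `(a_i(λ))_i` nonzero. A linear substitution does not increase strength.
-/

section Strength

variable {K σ τ : Type*} [CommRing K] {d : ℕ}

lemma HasStrengthDecomp.aeval {f : MvPolynomial σ K} {s : ℕ} (h : HasStrengthDecomp d f s)
    {φ : σ → MvPolynomial τ K} (hφ : ∀ i, (φ i).IsHomogeneous 1) :
    HasStrengthDecomp d (MvPolynomial.aeval φ f) s := by
  obtain ⟨g, h, e, he, rfl⟩ := h
  refine ⟨fun i => MvPolynomial.aeval φ (g i), fun i => MvPolynomial.aeval φ (h i), e,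
    fun i => ⟨(he i).1, (he i).2.1, ?_, ?_⟩, by simp [map_sum]⟩
  · simpa using (he i).2.2.1.aeval φ hφ
  · simpa using (he i).2.2.2.aeval φ hφ

lemma strength_aeval_le (f : MvPolynomial σ K) {φ : σ → MvPolynomial τ K}
    (hφ : ∀ i, (φ i).IsHomogeneous 1) : strength d (aeval φ f) ≤ strength d f := by
  refine sInf_le_sInf ?_
  rintro _ ⟨k, rfl, hk⟩
  exact ⟨k, rfl, hk.aeval hφ⟩

end Strength

namespace MvPolynomial

lemma IsHomogeneous.aeval_mul_left {R S σ : Type*} [CommSemiring R] [CommSemiring S]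
    [Algebra R S] {g : MvPolynomial σ R} {d : ℕ} (hg : g.IsHomogeneous d) (t : S) (x : σ → S) :
    MvPolynomial.aeval (fun k => t * x k) g = t ^ d * MvPolynomial.aeval x g := by
  simp only [aeval_eq_eval₂Hom, coe_eval₂Hom, eval₂_eq, Finset.mul_sum]
  refine Finset.sum_congr rfl fun m hm => ?_
  have hdeg : ∑ i ∈ m.support, m i = d := (hg.degree_eq_sum_deg_support hm).symm
  simp only [mul_pow, Finset.prod_mul_distrib, Finset.prod_pow_eq_pow_sum, hdeg]
  ring

lemma aeval_C_X_eq_C {K σ τ : Type*} [CommSemiring K] (g : MvPolynomial σ K) :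
    aeval (fun k => (C (X k) : MvPolynomial τ (MvPolynomial σ K))) g = C g := by
  induction g using MvPolynomial.induction_on with
  | C a => simp [algebraMap_eq]
  | add p q hp hq => simp only [map_add, hp, hq]
  | mul_X p k hp => simp only [map_mul, hp, aeval_X]

end MvPolynomial

/-- The substitution `w_{(j,k)} ↦ λ_j v_k`, restricting forms on `V^ℓ` along
`v ↦ (λ_1 v, …, λ_ℓ v)`. -/
noncomputable def diagonalSubst {K : Type*} [CommSemiring K] (N : ℕ) {ℓ : ℕ} (lam : Fin ℓ → K) :
    Fin ℓ × Fin N → MvPolynomial (Fin N) K :=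
  fun p => C (lam p.1) * X p.2

lemma isHomogeneous_diagonalSubst {K : Type*} [CommSemiring K] (N : ℕ) {ℓ : ℕ} (lam : Fin ℓ → K)
    (p : Fin ℓ × Fin N) : (diagonalSubst N lam p).IsHomogeneous 1 :=
  (isHomogeneous_X K p.2).C_mul (lam p.1)

lemma aeval_diagonalSubst_resComponent {K : Type*} [CommSemiring K] {N ℓ d : ℕ}
    {g : MvPolynomial (Fin N) K} (hg : g.IsHomogeneous d) (lam : Fin ℓ → K) (ε : Fin ℓ →₀ ℕ) :
    aeval (diagonalSubst N lam) (resComponent N ℓ g ε) =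
      C (coeff ε ((∑ j, lam j • X j : MvPolynomial (Fin ℓ) K) ^ d)) * g := by
  set L : MvPolynomial (Fin ℓ) (MvPolynomial (Fin N) K) := map C (∑ j, lam j • X j) with hL
  -- `Σ_j x_j w_j` becomes `L • v` with `L = Σ_j λ_j x_j`
  have hsubst : ∀ P : MvPolynomial (Fin N) K,
      map (aeval (diagonalSubst N lam)).toRingHom (sumToIter K (Fin ℓ) (Fin ℓ × Fin N)
        (aeval (fun k => ∑ j : Fin ℓ, X (Sum.inl j) * X (Sum.inr (j, k))) P)) =
      aeval (fun k => L * C (X k)) P := by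
    intro P
    induction P using MvPolynomial.induction_on with
    | C a => simp [sumToIter_C, algebraMap_eq]
    | add p q hp hq => simp only [map_add, hp, hq]
    | mul_X p k hp =>
      simp only [map_mul, hp, aeval_X, map_sum, sumToIter_Xl, sumToIter_Xr, map_X, map_C, hL,
        Finset.sum_mul]
      congr 1
      refine Finset.sum_congr rfl fun j _ => ?_
      simp only [diagonalSubst, smul_eq_C_mul, AlgHom.toRingHom_eq_coe, RingHom.coe_coe, aeval_X,
        map_mul, map_C, map_X]
      ring
  calc aeval (diagonalSubst N lam) (resComponent N ℓ g ε)
      = coeff ε (aeval (fun k => L * C (X k)) g) := by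
        rw [← hsubst, coeff_map]
        rfl
    _ = C (coeff ε ((∑ j, lam j • X j : MvPolynomial (Fin ℓ) K) ^ d)) * g := by
        rw [hg.aeval_mul_left, aeval_C_X_eq_C, mul_comm, coeff_C_mul, hL, ← map_pow, coeff_map,
          mul_comm]

section RestrictedCoeff

variable {K ι : Type*} {ℓ : ℕ}

noncomputable def restrictedCoeff [CommSemiring K] (c : (ι × (Fin ℓ →₀ ℕ)) →₀ K) (i : ι) :
    MvPolynomial (Fin ℓ) K :=
  (c.curry i).sum fun ε t => monomial ε (t * ε.multinomial)

lemma coeff_restrictedCoeff [CommSemiring K] (c : (ι × (Fin ℓ →₀ ℕ)) →₀ K) (i : ι)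
    (ε : Fin ℓ →₀ ℕ) : coeff ε (restrictedCoeff c i) = c (i, ε) * ε.multinomial := by
  classical
  simp +contextual [restrictedCoeff, Finsupp.sum, coeff_sum, coeff_monomial]

lemma exists_restrictedCoeff_ne_zero [CommSemiring K] [NoZeroDivisors K] [CharZero K]
    {c : (ι × (Fin ℓ →₀ ℕ)) →₀ K} (hc : c ≠ 0) : ∃ i, restrictedCoeff c i ≠ 0 := by
  obtain ⟨⟨i, ε⟩, hiε⟩ := Finsupp.ne_iff.mp hc
  have hε : (ε.multinomial : K) ≠ 0 := by
    rw [Finsupp.multinomial_eq]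
    exact_mod_cast (Nat.multinomial_pos _ _).ne'
  refine ⟨i, fun h => mul_ne_zero hiε hε ?_⟩
  rw [← coeff_restrictedCoeff, h, coeff_zero]

lemma aeval_diagonalSubst_sum_resComponent [CommSemiring K] [Fintype ι] {N d : ℕ}
    {f : ι → MvPolynomial (Fin N) K} (hf : ∀ i, (f i).IsHomogeneous d)
    {c : (ι × (Fin ℓ →₀ ℕ)) →₀ K} (hcd : ∀ p ∈ c.support, (p.2.sum fun _ n => n) = d)
    (lam : Fin ℓ → K) :
    aeval (diagonalSubst N lam) (c.sum fun p t => C t * resComponent N ℓ (f p.1) p.2) =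
      ∑ i, C (eval lam (restrictedCoeff c i)) * f i := by
  calc aeval (diagonalSubst N lam) (c.sum fun p t => C t * resComponent N ℓ (f p.1) p.2)
      = c.sum fun p t => C (eval lam (monomial p.2 (t * p.2.multinomial))) * f p.1 := by
        rw [Finsupp.sum, Finsupp.sum, map_sum]
        refine Finset.sum_congr rfl fun p hp => ?_
        rw [map_mul, aeval_C, aeval_diagonalSubst_resComponent (hf p.1),
          coeff_linearCombination_X_pow_of_fintype, if_pos (hcd p hp), eval_monomial]
        simp only [algebraMap_eq, map_mul]
        ring
    _ = c.curry.sum fun i ci =>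
          ci.sum fun ε t => C (eval lam (monomial ε (t * ε.multinomial))) * f i :=
        (Finsupp.sum_curry_index c fun i ε t =>
          C (eval lam (monomial ε (t * ε.multinomial))) * f i).symm
    _ = ∑ i, C (eval lam (restrictedCoeff c i)) * f i := by
        rw [Finsupp.sum_fintype _ _ (by simp)]
        simp [restrictedCoeff, map_finsuppSum, Finsupp.sum_mul]

end RestrictedCoeff

/-- The collective strength of the components of the restriction map `Res` is at least the
collective strength of `(f₁, …, f_r)`. -/
theorem stmt4 {K : Type*} [Field K] [CharZero K] (N r ℓ d : ℕ)
    (f : Fin r → MvPolynomial (Fin N) K) (hf : ∀ i, (f i).IsHomogeneous d)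
    (c : (Fin r × (Fin ℓ →₀ ℕ)) →₀ K) (hc : c ≠ 0)
    (hcd : ∀ p ∈ c.support, (p.2.sum fun _ n => n) = d) :
    (⨅ (a : Fin r → K) (_ : a ≠ 0), strength d (∑ i, MvPolynomial.C (a i) * f i)) ≤
      strength d (c.sum fun p t => MvPolynomial.C t * resComponent N ℓ (f p.1) p.2) := by
  obtain ⟨i, hi⟩ := exists_restrictedCoeff_ne_zero hc
  obtain ⟨lam, hlam⟩ : ∃ lam, eval lam (restrictedCoeff c i) ≠ 0 := by
    contrapose! hi
    exact MvPolynomial.funext fun lam => by simpa using hi lam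
  have ha : (fun i => eval lam (restrictedCoeff c i)) ≠ 0 := fun h => hlam (congrFun h i)
  calc (⨅ (a : Fin r → K) (_ : a ≠ 0), strength d (∑ i, C (a i) * f i))
      ≤ strength d (∑ i, C (eval lam (restrictedCoeff c i)) * f i) :=
        iInf₂_le (fun i => eval lam (restrictedCoeff c i)) ha
    _ = strength d (aeval (diagonalSubst N lam)
          (c.sum fun p t => C t * resComponent N ℓ (f p.1) p.2)) := by
        rw [aeval_diagonalSubst_sum_resComponent hf hcd]
    _ ≤ _ := strength_aeval_le _ (isHomogeneous_diagonalSubst N lam)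
end

section
/- Let K be a field of characteristic 0 and let f^1,...,f^{d-1} be nonzero bihomogeneous forms on K^r × K^r where f^j has bidegree (d-j, j), each of individual strength at least s. Then the collective strength of (f^1,...,f^{d-1}) is at least s/(d-1). -/
open MvPolynomial

/-- The weight function expressing bidegrees on `K^r × K^r`. -/
def biweight (r : ℕ) : Fin r ⊕ Fin r → ℕ × ℕ :=
  Sum.elim (fun _ => ((1 : ℕ), (0 : ℕ))) (fun _ => ((0 : ℕ), (1 : ℕ)))

/-! The bidegree-`(d - j, j)` component of `F = ∑ cᵢ fⁱ` is `cⱼ fʲ`. Taking a bihomogeneous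
component is additive, and for `d ≥ 3` the component of a single product `g * h` of forms of
degrees `e` and `d - e` is a sum of at most `d - 1` products of bihomogeneous pieces of `g` and
`h`, hence has strength at most `d - 1`. So a decomposition of `F` of length `k` yields one of
`fʲ` of length `(d - 1) k`. For `d = 2` the count is `2` rather than `d - 1`, but then there is
only one form and `F = c₁ f¹`. -/

open Finset

section Strength

variable {R σ : Type*} [CommRing R] {d : ℕ}

lemma strength_le_of_hasStrengthDecomp {f : MvPolynomial σ R} {k : ℕ}
    (h : HasStrengthDecomp d f k) : strength d f ≤ k :=
  sInf_le ⟨k, rfl, h⟩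

lemma exists_hasStrengthDecomp_of_strength_ne_top {f : MvPolynomial σ R}
    (h : strength d f ≠ ⊤) : ∃ k : ℕ, strength d f = k ∧ HasStrengthDecomp d f k := by
  have hne : {s : ℕ∞ | ∃ k : ℕ, s = k ∧ HasStrengthDecomp d f k}.Nonempty :=
    Set.nonempty_iff_ne_empty.2 fun he => h (by rw [strength, he, sInf_empty])
  obtain ⟨k, hk, hdec⟩ := csInf_mem hne
  exact ⟨k, hk, hdec⟩

lemma hasStrengthDecomp_zero : HasStrengthDecomp d (0 : MvPolynomial σ R) 0 :=
  ⟨Fin.elim0, Fin.elim0, Fin.elim0, fun i => i.elim0, by simp⟩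

lemma HasStrengthDecomp.add {f f' : MvPolynomial σ R} {k k' : ℕ}
    (hf : HasStrengthDecomp d f k) (hf' : HasStrengthDecomp d f' k') :
    HasStrengthDecomp d (f + f') (k + k') := by
  obtain ⟨g, h, e, he, rfl⟩ := hf
  obtain ⟨g', h', e', he', rfl⟩ := hf'
  refine ⟨Fin.append g g', Fin.append h h', Fin.append e e', fun i => ?_, ?_⟩
  · refine Fin.addCases (fun i => ?_) (fun i => ?_) i <;> simp [he, he']
  · simp [Fin.sum_univ_add]

lemma HasStrengthDecomp.C_mul {f : MvPolynomial σ R} {k : ℕ} (hf : HasStrengthDecomp d f k)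
    (a : R) : HasStrengthDecomp d (C a * f) k := by
  obtain ⟨g, h, e, he, rfl⟩ := hf
  exact ⟨fun i => C a * g i, h, e,
    fun i => ⟨(he i).1, (he i).2.1, (he i).2.2.1.C_mul a, (he i).2.2.2⟩,
    by simp only [mul_sum, mul_assoc]⟩

lemma strength_zero : strength d (0 : MvPolynomial σ R) = 0 :=
  nonpos_iff_eq_zero.1 (strength_le_of_hasStrengthDecomp hasStrengthDecomp_zero)

lemma strength_add_le (f f' : MvPolynomial σ R) :
    strength d (f + f') ≤ strength d f + strength d f' := by
  rcases eq_or_ne (strength d f) ⊤ with hf | hf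
  · simp [hf]
  rcases eq_or_ne (strength d f') ⊤ with hf' | hf'
  · simp [hf']
  obtain ⟨k, hk, hdec⟩ := exists_hasStrengthDecomp_of_strength_ne_top hf
  obtain ⟨k', hk', hdec'⟩ := exists_hasStrengthDecomp_of_strength_ne_top hf'
  rw [hk, hk', ← Nat.cast_add]
  exact strength_le_of_hasStrengthDecomp (hdec.add hdec')

lemma strength_sum_le {ι : Type*} (s : Finset ι) (f : ι → MvPolynomial σ R) :
    strength d (∑ i ∈ s, f i) ≤ ∑ i ∈ s, strength d (f i) :=
  le_sum_of_subadditive _ strength_zero.le strength_add_le s f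

lemma strength_mul_le_one {e : ℕ} {g h : MvPolynomial σ R} (he : 0 < e) (hed : e < d)
    (hg : g.IsHomogeneous e) (hh : h.IsHomogeneous (d - e)) : strength d (g * h) ≤ 1 := by
  simpa using strength_le_of_hasStrengthDecomp (k := 1)
    ⟨fun _ => g, fun _ => h, fun _ => e, fun _ => ⟨he, hed, hg, hh⟩, by simp⟩

lemma strength_C_mul_le (a : R) (f : MvPolynomial σ R) :
    strength d (C a * f) ≤ strength d f := by
  rcases eq_or_ne (strength d f) ⊤ with hf | hf
  · simp [hf]
  obtain ⟨k, hk, hdec⟩ := exists_hasStrengthDecomp_of_strength_ne_top hf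
  rw [hk]
  exact strength_le_of_hasStrengthDecomp (hdec.C_mul a)

lemma strength_C_mul {a : R} (ha : IsUnit a) (f : MvPolynomial σ R) :
    strength d (C a * f) = strength d f := by
  obtain ⟨u, rfl⟩ := ha
  refine le_antisymm (strength_C_mul_le _ f) ?_
  calc strength d f = strength d (C (↑u⁻¹ : R) * (C (u : R) * f)) := by
        rw [← mul_assoc, ← C_mul, Units.inv_mul, C_1, one_mul]
    _ ≤ strength d (C (u : R) * f) := strength_C_mul_le _ _

end Strength

lemma MvPolynomial.isHomogeneous_weightedHomogeneousComponent {R σ M : Type*} [CommSemiring R]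
    [AddCommMonoid M] {w : σ → M} {φ : MvPolynomial σ R} {n : ℕ} (hφ : φ.IsHomogeneous n)
    (m : M) : (weightedHomogeneousComponent w m φ).IsHomogeneous n := by
  classical
  intro u hu
  rw [coeff_weightedHomogeneousComponent] at hu
  split_ifs at hu
  exacts [hφ hu, absurd rfl hu]

lemma MvPolynomial.weightedHomogeneousComponent_sum_C_mul {R σ ι M : Type*} [CommSemiring R]
    [AddCommMonoid M] [Fintype ι] {w : σ → M} {m : ι → M} (hm : Function.Injective m)
    {f : ι → MvPolynomial σ R} (hf : ∀ i, IsWeightedHomogeneous w (f i) (m i)) (c : ι → R)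
    (j : ι) : weightedHomogeneousComponent w (m j) (∑ i, C (c i) * f i) = C (c j) * f j := by
  rw [map_sum, sum_eq_single j]
  · rw [weightedHomogeneousComponent_C_mul, (hf j).weightedHomogeneousComponent_same]
  · intro i _ hij
    rw [weightedHomogeneousComponent_C_mul,
      (hf i).weightedHomogeneousComponent_ne _ (hm.ne hij.symm), mul_zero]
  · simp

section Biweight

variable {R : Type*} [CommSemiring R] {r : ℕ}

lemma weight_biweight_fst_add_snd (u : Fin r ⊕ Fin r →₀ ℕ) :
    (u.weight (biweight r)).1 + (u.weight (biweight r)).2 = u.degree := by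
  induction u using Finsupp.induction_linear with
  | zero => simp
  | add u v hu hv => simp only [map_add, Prod.fst_add, Prod.snd_add, ← hu, ← hv]; omega
  | single x n => cases x <;> simp [biweight, Finsupp.weight_single]

lemma MvPolynomial.IsHomogeneous.sum_weightedHomogeneousComponent_biweight {e : ℕ}
    {g : MvPolynomial (Fin r ⊕ Fin r) R} (hg : g.IsHomogeneous e) :
    ∑ p ∈ range (e + 1), weightedHomogeneousComponent (biweight r) (p, e - p) g = g := by
  classical
  ext u
  simp only [coeff_sum, coeff_weightedHomogeneousComponent]
  by_cases hu : coeff u g = 0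
  · simp [hu]
  have hdeg : (u.weight (biweight r)).1 + (u.weight (biweight r)).2 = e := by
    rw [weight_biweight_fst_add_snd, Finsupp.degree_eq_weight_one]
    exact hg hu
  rw [sum_eq_single_of_mem (u.weight (biweight r)).1 (mem_range.2 (by omega))]
  · rw [if_pos]
    exact Prod.ext rfl (Nat.eq_sub_of_add_eq' hdeg)
  · intro p _ hp
    exact if_neg fun h => hp (congrArg Prod.fst h).symm

lemma weightedHomogeneousComponent_biweight_mul {d e a b : ℕ} (hab : a + b = d) (hed : e ≤ d)
    {g h : MvPolynomial (Fin r ⊕ Fin r) R} (hg : g.IsHomogeneous e)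
    (hh : h.IsHomogeneous (d - e)) :
    weightedHomogeneousComponent (biweight r) (a, b) (g * h) =
      ∑ pq ∈ range (e + 1) ×ˢ range (d - e + 1) with pq.1 + pq.2 = a,
        weightedHomogeneousComponent (biweight r) (pq.1, e - pq.1) g *
          weightedHomogeneousComponent (biweight r) (pq.2, d - e - pq.2) h := by
  classical
  conv_lhs => rw [← hg.sum_weightedHomogeneousComponent_biweight,
    ← hh.sum_weightedHomogeneousComponent_biweight]
  rw [sum_mul_sum, ← sum_product', map_sum, sum_filter]
  refine sum_congr rfl fun ⟨p, q⟩ hpq => ?_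
  rw [mem_product, mem_range, mem_range] at hpq
  have hw :=
    (weightedHomogeneousComponent_isWeightedHomogeneous (w := biweight r) (p, e - p) g).mul
      (weightedHomogeneousComponent_isWeightedHomogeneous (w := biweight r) (q, d - e - q) h)
  split_ifs with hpqa
  · have hbideg : ((p, e - p) + (q, d - e - q) : ℕ × ℕ) = (a, b) := by
      simp only [Prod.mk_add_mk, Prod.mk.injEq]
      omega
    rw [hbideg] at hw
    exact hw.weightedHomogeneousComponent_same
  · refine hw.weightedHomogeneousComponent_ne _ fun h => hpqa ?_
    simpa using (congrArg Prod.fst h).symm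

end Biweight

lemma card_filter_fst_add_snd_eq_le {d e a : ℕ} (hd : 3 ≤ d) (hed : e ≤ d) :
    #{pq ∈ range (e + 1) ×ˢ range (d - e + 1) | pq.1 + pq.2 = a} ≤ d - 1 := by
  calc _ ≤ #(Icc (a + e - d) (min e a)) := by
        refine card_le_card_of_injOn Prod.fst (fun pq hpq => ?_) fun pq hpq pq' hpq' hfst => ?_
        · simp only [coe_filter, mem_product, mem_range, Set.mem_ofPred_eq] at hpq
          simp only [coe_Icc, Set.mem_Icc]
          omega
        · simp only [coe_filter, mem_product, mem_range, Set.mem_ofPred_eq] at hpq hpq'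
          exact Prod.ext hfst (by omega)
    _ ≤ d - 1 := by
        rw [Nat.card_Icc]
        omega

section BiweightStrength

variable {R : Type*} [CommRing R] {r d : ℕ}

lemma strength_weightedHomogeneousComponent_biweight_mul_le {e a b : ℕ} (hd : 3 ≤ d)
    (hab : a + b = d) (he : 0 < e) (hed : e < d)
    {g h : MvPolynomial (Fin r ⊕ Fin r) R} (hg : g.IsHomogeneous e)
    (hh : h.IsHomogeneous (d - e)) :
    strength d (weightedHomogeneousComponent (biweight r) (a, b) (g * h)) ≤ (d : ℕ∞) - 1 := by
  rw [weightedHomogeneousComponent_biweight_mul hab hed.le hg hh]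
  refine (strength_sum_le _ _).trans ?_
  calc _ ≤ ∑ _pq ∈ range (e + 1) ×ˢ range (d - e + 1) with _pq.1 + _pq.2 = a, (1 : ℕ∞) :=
        sum_le_sum fun _ _ => strength_mul_le_one he hed
          (isHomogeneous_weightedHomogeneousComponent hg _)
          (isHomogeneous_weightedHomogeneousComponent hh _)
    _ ≤ (d : ℕ∞) - 1 := by
        rw [sum_const, nsmul_one]
        exact_mod_cast card_filter_fst_add_snd_eq_le hd hed.le

lemma strength_weightedHomogeneousComponent_biweight_le {a b : ℕ} (hd : 3 ≤ d)
    (hab : a + b = d) (F : MvPolynomial (Fin r ⊕ Fin r) R) :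
    strength d (weightedHomogeneousComponent (biweight r) (a, b) F) ≤
      ((d : ℕ∞) - 1) * strength d F := by
  rcases eq_or_ne (strength d F) ⊤ with hF | hF
  · have hd1 : (d : ℕ∞) - 1 ≠ 0 := by
      rw [← Nat.cast_one, ← ENat.natCast_sub, Nat.cast_ne_zero]
      omega
    simp [hF, hd1]
  obtain ⟨k, hk, g, h, e, he, rfl⟩ := exists_hasStrengthDecomp_of_strength_ne_top hF
  rw [hk, map_sum]
  calc _ ≤ ∑ i, strength d (weightedHomogeneousComponent (biweight r) (a, b) (g i * h i)) :=
        strength_sum_le _ _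
    _ ≤ ∑ _i : Fin k, ((d : ℕ∞) - 1) := sum_le_sum fun i _ =>
        strength_weightedHomogeneousComponent_biweight_mul_le hd hab (he i).1 (he i).2.1
          (he i).2.2.1 (he i).2.2.2
    _ = ((d : ℕ∞) - 1) * k := by simp [mul_comm]

end BiweightStrength

theorem stmt7_general {K : Type*} [Field K] (r d s : ℕ) (hd : 2 ≤ d)
    (f : Fin (d - 1) → MvPolynomial (Fin r ⊕ Fin r) K)
    (hbh : ∀ j : Fin (d - 1),
      MvPolynomial.IsWeightedHomogeneous (biweight r) (f j) (d - ((j : ℕ) + 1), (j : ℕ) + 1))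
    (hstr : ∀ j, (s : ℕ∞) ≤ strength d (f j))
    (c : Fin (d - 1) → K) (hc : c ≠ 0) :
    (s : ℕ∞) ≤ ((d : ℕ∞) - 1) * strength d (∑ j, MvPolynomial.C (c j) * f j) := by
  obtain ⟨j, hj⟩ : ∃ j, c j ≠ 0 := Function.ne_iff.mp hc
  calc (s : ℕ∞) ≤ strength d (f j) := hstr j
    _ = strength d (C (c j) * f j) := (strength_C_mul hj.isUnit _).symm
    _ ≤ ((d : ℕ∞) - 1) * strength d (∑ j, C (c j) * f j) := ?_
  rcases hd.eq_or_lt with rfl | hd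
  · have hsum : ∑ i, C (c i) * f i = C (c j) * f j :=
      sum_eq_single j (fun i _ hij => absurd (Fin.ext (by omega)) hij) (absurd (mem_univ j))
    rw [hsum, Nat.cast_ofNat, show (2 : ℕ∞) - 1 = 1 from rfl, one_mul]
  · have hbideg : Function.Injective fun j : Fin (d - 1) => (d - ((j : ℕ) + 1), (j : ℕ) + 1) :=
      fun i i' h => Fin.ext (by simpa using congrArg Prod.snd h)
    rw [← weightedHomogeneousComponent_sum_C_mul hbideg hbh c j]
    exact strength_weightedHomogeneousComponent_biweight_le hd (by omega) _

/-- If `f^1, …, f^{d-1}` are nonzero bihomogeneous forms on `K^r × K^r`, `f^j` of bidegree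
`(d-j, j)` and of strength at least `s`, then any nontrivial linear combination has strength
at least `s / (d-1)`; i.e. the collective strength is at least `s / (d-1)`. -/
theorem stmt7 {K : Type*} [Field K] [CharZero K] (r d s : ℕ) (hd : 2 ≤ d)
    (f : Fin (d - 1) → MvPolynomial (Fin r ⊕ Fin r) K)
    (hbh : ∀ j : Fin (d - 1),
      MvPolynomial.IsWeightedHomogeneous (biweight r) (f j) (d - ((j : ℕ) + 1), (j : ℕ) + 1))
    (hne : ∀ j, f j ≠ 0)
    (hstr : ∀ j, (s : ℕ∞) ≤ strength d (f j))
    (c : Fin (d - 1) → K) (hc : c ≠ 0) :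
    (s : ℕ∞) ≤ ((d : ℕ∞) - 1) * strength d (∑ j, MvPolynomial.C (c j) * f j) :=
  stmt7_general r d s hd f hbh hstr c hc
end

section
/- Let K be a Birch field of characteristic 0, d ≥ 1 odd, and suppose Theorem 'main' holds (Zariski density of K-points for single forms of degree d of strength ≥ C(d)). Then there is a constant C'(d) such that any equation a₁x₁^d + ... + aₙxₙ^d = 1 with all a_i ∈ K nonzero and n ≥ C'(d) has a solution in Kⁿ. -/
open MvPolynomial

/-!
If `∑ aᵢ xᵢ^d = ∑_{i<k} gᵢ hᵢ` with all `gᵢ, hᵢ` forms of positive degree, then at a common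
zero of the `2k` forms `gᵢ, hᵢ` every partial derivative `d aᵢ xᵢ^(d-1)` of the diagonal form
vanishes, so that common zero is the origin. By Krull's height theorem and the Nullstellensatz,
`2k` polynomials vanishing at the origin of `L^m` (`L` algebraically closed) have another common
zero once `2k < m`; hence the diagonal form in `m` variables has strength at least `m / 2`.

Taking `f = ∑ aᵢ xᵢ^d - x_{n+1}^d`, the density hypothesis for the nonempty open set
`{x_{n+1} ≠ 0}` of `{f = 0}` (nonempty over the algebraic closure) gives a `K`-point with
`x_{n+1} ≠ 0`, and dividing by `x_{n+1}` solves `∑ aᵢ xᵢ^d = 1`.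
-/

namespace MvPolynomial

section Translation

variable {σ R : Type*} [CommRing R]

noncomputable def translate (x : σ → R) : MvPolynomial σ R ≃ₐ[R] MvPolynomial σ R :=
  AlgEquiv.ofAlgHom (aeval fun i => X i + C (x i)) (aeval fun i => X i - C (x i))
    (by ext; simp) (by ext; simp)

theorem eval_translate (x y : σ → R) (p : MvPolynomial σ R) :
    eval y (translate x p) = eval (y + x) p := by
  change eval y (aeval (fun i => X i + C (x i)) p) = _
  induction p using MvPolynomial.induction_on <;> simp_all [add_comm]

theorem comap_translate_vanishingIdeal_singleton {K : Type*} [Field K] (x y : σ → K) :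
    (vanishingIdeal K {y}).comap (translate x) = vanishingIdeal K {y + x} := by
  ext p
  simp [eval_translate]

end Translation

section Dimension

variable {σ K : Type*} [Field K] [IsAlgClosed K] [Finite σ]

/- Every maximal ideal is the ideal of a point, and translations move any point to any other,
so all maximal ideals have the same height, which must then be the Krull dimension. -/
theorem height_vanishingIdeal_singleton (x : σ → K) :
    (vanishingIdeal K {x}).height = Nat.card σ := by
  have h_indep (y : σ → K) : (vanishingIdeal K {y}).height = (vanishingIdeal K {x}).height := by
    have h := comap_translate_vanishingIdeal_singleton (y - x) x
    rw [add_sub_cancel] at h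
    rw [← h]
    exact RingEquiv.height_comap (translate (y - x)).toRingEquiv _
  have hdim : ringKrullDim (MvPolynomial σ K) = Nat.card σ := by
    simp [ringKrullDim_eq_zero_of_field]
  have hmax : (vanishingIdeal K {x} : Ideal (MvPolynomial σ K)).IsMaximal :=
    isMaximal_iff_eq_vanishingIdeal_singleton.mpr ⟨x, rfl⟩
  apply le_antisymm
  · have := Ideal.height_le_ringKrullDim_of_ne_top hmax.ne_top
    rw [hdim] at this
    exact_mod_cast this
  · have : ringKrullDim (MvPolynomial σ K) ≤ (vanishingIdeal K {x}).height := by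
      rw [ringKrullDim_le_iff_isMaximal_height_le]
      intro M hM
      obtain ⟨y, rfl⟩ := isMaximal_iff_eq_vanishingIdeal_singleton.mp hM
      rw [h_indep]
    rw [hdim] at this
    exact_mod_cast this

/- A minimal prime over the span of the `p i` lying below the ideal of the origin has height at
most `Nat.card ι` (Krull), so it is strictly smaller, and its zero locus is more than a point. -/
theorem exists_ne_zero_forall_eval_eq_zero {ι : Type*} [Finite ι]
    (p : ι → MvPolynomial σ K) (hp : ∀ i, eval 0 (p i) = 0) (hcard : Nat.card ι < Nat.card σ) :
    ∃ x ≠ 0, ∀ i, eval x (p i) = 0 := by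
  set m₀ : Ideal (MvPolynomial σ K) := vanishingIdeal K {(0 : σ → K)}
  have : m₀.IsMaximal := isMaximal_iff_eq_vanishingIdeal_singleton.mpr ⟨0, rfl⟩
  have hle : Ideal.span (Set.range p) ≤ m₀ := by
    rw [Ideal.span_le]
    rintro _ ⟨i, rfl⟩
    exact (mem_vanishingIdeal_singleton_iff _ _).mpr (hp i)
  obtain ⟨P, hPmin, hPm₀⟩ := Ideal.exists_minimalPrimes_le hle
  have : P.IsPrime := hPmin.1.1
  have hP_lt : P.height < m₀.height := calc
    P.height ≤ (Set.range p).ncard :=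
      Ideal.height_le_card_of_mem_minimalPrimes_span (Set.finite_range p) hPmin
    _ ≤ Nat.card ι := by exact_mod_cast Finite.card_range_le p
    _ < Nat.card σ := by exact_mod_cast hcard
    _ = m₀.height := (height_vanishingIdeal_singleton 0).symm
  by_contra! h
  have hzero : zeroLocus K P ⊆ {0} := by
    intro x hx
    by_contra hx0
    obtain ⟨i, hi⟩ := h x hx0
    exact hi (hx _ (hPmin.1.2 (Ideal.subset_span ⟨i, rfl⟩)))
  have : m₀ ≤ P := by
    simpa only [IsPrime.vanishingIdeal_zeroLocus] using vanishingIdeal_anti_mono (k := K) hzero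
  exact hP_lt.ne (congrArg Ideal.height (le_antisymm hPm₀ this))

end Dimension

theorem IsHomogeneous.eval_zero_eq_zero {σ R : Type*} [CommRing R] {p : MvPolynomial σ R}
    {n : ℕ} (hp : p.IsHomogeneous n) (hn : n ≠ 0) : eval 0 p = 0 := by
  rw [eval_zero]
  exact hp.coeff_eq_zero (by simpa using hn.symm)

theorem eval_pderiv_sum_mul_eq_zero {σ R ι : Type*} [CommRing R] [Fintype ι]
    (g h : ι → MvPolynomial σ R) (x : σ → R) (hg : ∀ i, eval x (g i) = 0)
    (hh : ∀ i, eval x (h i) = 0) (j : σ) :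
    eval x (pderiv j (∑ i, g i * h i)) = 0 := by
  simp [hg, hh]

section DiagonalForm

variable {σ R : Type*} [Fintype σ] [CommRing R]

noncomputable def diagonalForm (c : σ → R) (d : ℕ) : MvPolynomial σ R :=
  ∑ i, C (c i) * X i ^ d

theorem isHomogeneous_diagonalForm (c : σ → R) (d : ℕ) : (diagonalForm c d).IsHomogeneous d :=
  IsHomogeneous.sum _ _ _ fun _ _ => isHomogeneous_C_mul_X_pow _ _ _

@[simp]
theorem eval_diagonalForm (c x : σ → R) (d : ℕ) :
    eval x (diagonalForm c d) = ∑ i, c i * x i ^ d := by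
  simp [diagonalForm]

theorem map_diagonalForm {S : Type*} [CommRing S] (φ : R →+* S) (c : σ → R) (d : ℕ) :
    map φ (diagonalForm c d) = diagonalForm (φ ∘ c) d := by
  simp [diagonalForm]

theorem eval_pderiv_diagonalForm (c x : σ → R) (d : ℕ) (j : σ) :
    eval x (pderiv j (diagonalForm c d)) = c j * (d * x j ^ (d - 1)) := by
  classical
  simp [diagonalForm, pderiv_X, Pi.single_apply]

theorem eval_diagonalForm_snoc {n : ℕ} (a : Fin n → R) (d : ℕ) (x : Fin (n + 1) → R) :
    eval x (diagonalForm (Fin.snoc a (-1)) d) =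
      ∑ i, a i * x i.castSucc ^ d - x (Fin.last n) ^ d := by
  simp [Fin.sum_univ_castSucc, sub_eq_add_neg]

end DiagonalForm

section DiagonalFormStrength

variable {σ K : Type*} [Fintype σ] [Field K] {d : ℕ}

theorem card_le_two_mul_of_diagonalForm_eq_sum_mul [IsAlgClosed K] {k : ℕ} (hd : (d : K) ≠ 0)
    (c : σ → K) (hc : ∀ i, c i ≠ 0) (g h : Fin k → MvPolynomial σ K)
    (hg : ∀ i, eval 0 (g i) = 0) (hh : ∀ i, eval 0 (h i) = 0)
    (hf : diagonalForm c d = ∑ i, g i * h i) :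
    Fintype.card σ ≤ 2 * k := by
  by_contra! hk
  obtain ⟨x, hx0, hx⟩ := exists_ne_zero_forall_eval_eq_zero (Sum.elim g h)
    (Sum.rec hg hh) (by simpa [two_mul] using hk)
  apply hx0
  funext j
  have hj := eval_pderiv_sum_mul_eq_zero g h x (fun i => hx (.inl i)) (fun i => hx (.inr i)) j
  rw [← hf, eval_pderiv_diagonalForm] at hj
  simp only [mul_eq_zero, hc j, hd, pow_eq_zero_iff', ne_eq, false_or] at hj
  exact hj.1

theorem card_le_two_mul_of_hasStrengthDecomp_diagonalForm {k : ℕ} (hd : (d : K) ≠ 0)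
    (c : σ → K) (hc : ∀ i, c i ≠ 0) (hdec : HasStrengthDecomp d (diagonalForm c d) k) :
    Fintype.card σ ≤ 2 * k := by
  obtain ⟨g, h, e, he, hf⟩ := hdec
  let φ := algebraMap K (AlgebraicClosure K)
  refine card_le_two_mul_of_diagonalForm_eq_sum_mul (d := d)
    (by simpa using (map_ne_zero φ).mpr hd) (φ ∘ c) (fun i => by simpa [φ] using hc i)
    (fun i => map φ (g i)) (fun i => map φ (h i))
    (fun i => ((he i).2.2.1.map φ).eval_zero_eq_zero (he i).1.ne')
    (fun i => ((he i).2.2.2.map φ).eval_zero_eq_zero (Nat.sub_ne_zero_of_lt (he i).2.1)) ?_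
  rw [← map_diagonalForm, hf]
  simp

theorem le_strength_diagonalForm (hd : (d : K) ≠ 0) (c : σ → K) (hc : ∀ i, c i ≠ 0) :
    (((Fintype.card σ + 1) / 2 : ℕ) : ℕ∞) ≤ strength d (diagonalForm c d) := by
  refine le_sInf ?_
  rintro _ ⟨k, rfl, hdec⟩
  have := card_le_two_mul_of_hasStrengthDecomp_diagonalForm hd c hc hdec
  exact_mod_cast (by omega : (Fintype.card σ + 1) / 2 ≤ k)

end DiagonalFormStrength

end MvPolynomial

theorem exists_sum_mul_pow_eq_one {σ K : Type*} [Fintype σ] [Field K] [IsAlgClosed K]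
    {d : ℕ} (hd : d ≠ 0) (a : σ → K) {i₀ : σ} (ha : a i₀ ≠ 0) :
    ∃ y : σ → K, ∑ i, a i * y i ^ d = 1 := by
  classical
  obtain ⟨t, ht⟩ := IsAlgClosed.exists_pow_nat_eq (a i₀)⁻¹ (Nat.pos_of_ne_zero hd)
  refine ⟨Pi.single i₀ t, ?_⟩
  rw [Finset.sum_eq_single i₀ (fun i _ hi => by simp [hi, hd]) (by simp)]
  simp [ht, ha]

theorem sum_mul_div_pow_eq_one {σ K : Type*} [Fintype σ] [Field K] {d : ℕ} (a x : σ → K)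
    {t : K} (ht : t ≠ 0) (h : ∑ i, a i * x i ^ d = t ^ d) :
    ∑ i, a i * (x i / t) ^ d = 1 := by
  simp_rw [div_pow, ← mul_div_assoc, ← Finset.sum_div, h]
  exact div_self (pow_ne_zero d ht)

theorem stmt12_general {K : Type*} [Field K] [CharZero K]
    (d : ℕ) (hd : Odd d)
    (hmain : ∃ C : ℕ, ∀ (m : ℕ) (f : MvPolynomial (Fin m) K), f.IsHomogeneous d →
      (C : ℕ∞) ≤ strength d f →
      ∀ g : MvPolynomial (Fin m) K,
        (∃ y : Fin m → AlgebraicClosure K,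
          MvPolynomial.eval y (MvPolynomial.map (algebraMap K (AlgebraicClosure K)) f) = 0 ∧
          MvPolynomial.eval y (MvPolynomial.map (algebraMap K (AlgebraicClosure K)) g) ≠ 0) →
        ∃ x : Fin m → K, MvPolynomial.eval x f = 0 ∧ MvPolynomial.eval x g ≠ 0) :
    ∃ C' : ℕ, ∀ n, C' ≤ n → ∀ a : Fin n → K, (∀ i, a i ≠ 0) →
      ∃ x : Fin n → K, ∑ i, a i * x i ^ d = 1 := by
  obtain ⟨C, hC⟩ := hmain
  refine ⟨2 * C + 1, fun n hn a ha => ?_⟩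
  have hd₀ : d ≠ 0 := hd.pos.ne'
  have hc : ∀ i, Fin.snoc (α := fun _ => K) a (-1) i ≠ 0 :=
    Fin.lastCases (by simp) fun i => by simpa using ha i
  have hstrength : (C : ℕ∞) ≤ strength d (diagonalForm (Fin.snoc a (-1)) d) :=
    le_trans (Nat.cast_le.mpr (by rw [Fintype.card_fin]; omega))
      (le_strength_diagonalForm (Nat.cast_ne_zero.mpr hd₀) _ hc)
  obtain ⟨y, hy⟩ := exists_sum_mul_pow_eq_one hd₀
    (fun i => algebraMap K (AlgebraicClosure K) (a i)) (i₀ := ⟨0, by omega⟩) (by simpa using ha _)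
  obtain ⟨x, hx, hxlast⟩ := hC (n + 1) _ (isHomogeneous_diagonalForm _ d) hstrength
    (X (Fin.last n)) ⟨Fin.snoc y 1, by
      simpa [map_diagonalForm, Fin.sum_univ_castSucc, ← sub_eq_add_neg, sub_eq_zero] using hy,
      by simp⟩
  rw [eval_X] at hxlast
  rw [eval_diagonalForm_snoc, sub_eq_zero] at hx
  exact ⟨_, sum_mul_div_pow_eq_one a _ hxlast hx⟩

/-- If `K` is a Birch field of characteristic `0` and the main theorem holds for degree-`d`
forms (Zariski density of `K`-points for single degree-`d` forms of strength at least some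
constant `C`), then there is `C'` such that every equation `a₁x₁^d + ⋯ + aₙxₙ^d = 1` with
all `a_i ≠ 0` and `n ≥ C'` has a solution in `K`. -/
theorem stmt12 {K : Type*} [Field K] [CharZero K]
    (hBirch : ∀ e : ℕ, Odd e → ∃ N : ℕ, ∀ n, N ≤ n → DiagSolvable K e n)
    (d : ℕ) (hd : Odd d)
    (hmain : ∃ C : ℕ, ∀ (m : ℕ) (f : MvPolynomial (Fin m) K), f.IsHomogeneous d →
      (C : ℕ∞) ≤ strength d f →
      ∀ g : MvPolynomial (Fin m) K,
        (∃ y : Fin m → AlgebraicClosure K,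
          MvPolynomial.eval y (MvPolynomial.map (algebraMap K (AlgebraicClosure K)) f) = 0 ∧
          MvPolynomial.eval y (MvPolynomial.map (algebraMap K (AlgebraicClosure K)) g) ≠ 0) →
        ∃ x : Fin m → K, MvPolynomial.eval x f = 0 ∧ MvPolynomial.eval x g ≠ 0) :
    ∃ C' : ℕ, ∀ n, C' ≤ n → ∀ a : Fin n → K, (∀ i, a i ≠ 0) →
      ∃ x : Fin n → K, ∑ i, a i * x i ^ d = 1 :=
  stmt12_general d hd hmain
end

section
/- Let d ≥ 1 be odd and a₁,...,aₙ nonzero elements of Kⁿ over a field K of characteristic 0. The form f = a₁x₁^d + ... + aₙxₙ^d − x_{n+1}^d on K^{n+1} has strength at least (n+1)/2. -/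
/-!
If `f = ∑ gᵢ hᵢ` with `2k` forms `gᵢ, hᵢ` of positive degree, every partial derivative
`∂f/∂xⱼ = d bⱼ xⱼ^(d-1)` of a diagonal form `f = ∑ bⱼ xⱼ^d` lies in the ideal `I = (g, h)`.
As `d bⱼ ≠ 0`, `I` contains a power of every variable, so the prime `(x₀, …, xₙ)` is minimal
over `I`. It has height `n + 1`, being the top of the chain of primes
`0 ⊂ (x₀) ⊂ (x₀, x₁) ⊂ ⋯`, so Krull's height theorem gives `n + 1 ≤ 2k`.
-/

open MvPolynomial

namespace MvPolynomial

variable {σ R : Type*} [CommRing R]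

noncomputable def killVars (s : Set σ) : MvPolynomial σ R →ₐ[R] MvPolynomial σ R :=
  aeval (sᶜ.indicator X)

lemma killVars_X_of_mem {s : Set σ} {i : σ} (hi : i ∈ s) :
    killVars s (X i : MvPolynomial σ R) = 0 := by
  simp [killVars, Set.indicator_of_notMem (Set.notMem_compl_iff.mpr hi)]

lemma killVars_X_of_notMem {s : Set σ} {i : σ} (hi : i ∉ s) :
    killVars s (X i : MvPolynomial σ R) = X i := by
  simp [killVars, Set.indicator_of_mem (Set.mem_compl hi)]

lemma killVars_comp_killVars_of_subset {s t : Set σ} (hst : s ⊆ t) :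
    (killVars t).comp (killVars s) = (killVars t : MvPolynomial σ R →ₐ[R] _) := by
  ext i
  by_cases hi : i ∈ s
  · simp [killVars_X_of_mem hi, killVars_X_of_mem (hst hi)]
  · simp [killVars_X_of_notMem hi]

lemma ker_killVars_mono {s t : Set σ} (hst : s ⊆ t) :
    RingHom.ker (killVars s : MvPolynomial σ R →ₐ[R] _) ≤ RingHom.ker (killVars t) := by
  intro p hp
  rw [RingHom.mem_ker] at hp ⊢
  rw [← killVars_comp_killVars_of_subset hst, AlgHom.comp_apply]
  simp [hp]

lemma X_mem_ker_killVars_iff [Nontrivial R] {s : Set σ} {i : σ} :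
    (X i : MvPolynomial σ R) ∈ RingHom.ker (killVars s) ↔ i ∈ s := by
  refine ⟨fun h => ?_, fun hi => killVars_X_of_mem hi⟩
  by_contra hi
  exact X_ne_zero i (by rwa [RingHom.mem_ker, killVars_X_of_notMem hi] at h)

lemma sub_killVars_mem_span_X_image (s : Set σ) (p : MvPolynomial σ R) :
    p - killVars s p ∈ Ideal.span (X '' s) := by
  induction p using MvPolynomial.induction_on with
  | C a => simp
  | add p q hp hq => simpa [add_sub_add_comm] using add_mem hp hq
  | mul_X p i hp =>
    have hX : X i - killVars s (X i : MvPolynomial σ R) ∈ Ideal.span (X '' s) := by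
      by_cases hi : i ∈ s
      · simpa [killVars_X_of_mem hi] using Ideal.subset_span (Set.mem_image_of_mem X hi)
      · simp [killVars_X_of_notMem hi]
    have : p * X i - killVars s (p * X i) =
        (p - killVars s p) * X i + killVars s p * (X i - killVars s (X i)) := by
      rw [map_mul]; ring
    rw [this]
    exact add_mem (Ideal.mul_mem_right _ _ hp) (Ideal.mul_mem_left _ _ hX)

lemma ker_killVars (s : Set σ) :
    RingHom.ker (killVars s : MvPolynomial σ R →ₐ[R] _) = Ideal.span (X '' s) := by
  refine le_antisymm (fun p hp => ?_) ?_
  · simpa [RingHom.mem_ker.mp hp] using sub_killVars_mem_span_X_image s p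
  · rw [Ideal.span_le]
    rintro _ ⟨i, hi, rfl⟩
    exact killVars_X_of_mem hi

instance isPrime_ker_killVars [IsDomain R] (s : Set σ) :
    (RingHom.ker (killVars s : MvPolynomial σ R →ₐ[R] _)).IsPrime :=
  RingHom.ker_isPrime _

lemma card_le_height_span_X_image [IsDomain R] (s : Finset σ) :
    (s.card : ℕ∞) ≤ (Ideal.span (X '' s) : Ideal (MvPolynomial σ R)).height := by
  classical
  induction s using Finset.induction_on with
  | empty => simp
  | insert i s hi ih =>
    rw [← ker_killVars] at ih ⊢
    have hlt : RingHom.ker (killVars (s : Set σ) : MvPolynomial σ R →ₐ[R] _) <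
        RingHom.ker (killVars (insert i s : Finset σ)) := by
      refine lt_of_le_of_ne (ker_killVars_mono (by simp)) fun h => hi ?_
      have : (X i : MvPolynomial σ R) ∈ RingHom.ker (killVars (insert i s : Finset σ)) :=
        X_mem_ker_killVars_iff.mpr (by simp)
      rwa [← h, X_mem_ker_killVars_iff] at this
    rw [Finset.card_insert_of_notMem hi, Nat.cast_add, Nat.cast_one]
    exact (add_le_add_left ih 1).trans (Ideal.height_add_one_le_of_lt_of_isPrime hlt)

lemma killVars_univ_apply (p : MvPolynomial σ R) :
    killVars Set.univ p = C (constantCoeff p) := by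
  rw [killVars, Set.compl_univ, Set.indicator_empty, aeval_zero', algebraMap_eq]

lemma span_X_image_univ_mem_minimalPrimes [IsDomain R] {t : Set (MvPolynomial σ R)}
    (ht : ∀ p ∈ t, constantCoeff p = 0) (hX : ∀ i, ∃ c, X i ^ c ∈ Ideal.span t) :
    Ideal.span (X '' Set.univ) ∈ (Ideal.span t).minimalPrimes := by
  rw [← ker_killVars]
  refine ⟨⟨inferInstance, Ideal.span_le.mpr fun p hp => ?_⟩, fun Q ⟨hQ, htQ⟩ _ => ?_⟩
  · simp [RingHom.mem_ker, killVars_univ_apply, ht p hp]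
  · rw [ker_killVars, Ideal.span_le]
    rintro _ ⟨i, -, rfl⟩
    obtain ⟨c, hc⟩ := hX i
    exact hQ.mem_of_pow_mem c (htQ hc)

theorem card_le_card_of_X_pow_mem_span [Fintype σ] [IsDomain R] [IsNoetherianRing R]
    {t : Finset (MvPolynomial σ R)} (ht : ∀ p ∈ t, constantCoeff p = 0)
    (hX : ∀ i, ∃ c, X i ^ c ∈ Ideal.span (t : Set (MvPolynomial σ R))) :
    Fintype.card σ ≤ t.card := by
  have hlow := card_le_height_span_X_image (R := R) (Finset.univ : Finset σ)
  have hup := Ideal.height_le_card_of_mem_minimalPrimes_span_finset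
    (span_X_image_univ_mem_minimalPrimes ht hX)
  rw [Finset.coe_univ] at hlow
  exact_mod_cast hlow.trans hup

end MvPolynomial

section Strength

variable {σ R : Type*} [CommRing R]

lemma HasStrengthDecomp.exists_finset_pderiv_mem_span {d k : ℕ} {f : MvPolynomial σ R}
    (hf : HasStrengthDecomp d f k) :
    ∃ t : Finset (MvPolynomial σ R), t.card ≤ 2 * k ∧ (∀ p ∈ t, constantCoeff p = 0) ∧
      ∀ i, pderiv i f ∈ Ideal.span (t : Set (MvPolynomial σ R)) := by
  classical
  obtain ⟨g, h, e, hgh, rfl⟩ := hf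
  refine ⟨Finset.univ.image g ∪ Finset.univ.image h, ?_, ?_, fun i => ?_⟩
  · calc _ ≤ (Finset.univ.image g).card + (Finset.univ.image h).card := Finset.card_union_le _ _
      _ ≤ k + k := add_le_add (Finset.card_image_le.trans (by simp))
          (Finset.card_image_le.trans (by simp))
      _ = 2 * k := (two_mul k).symm
  · simp only [Finset.mem_union, Finset.mem_image, Finset.mem_univ, true_and]
    rintro p (⟨j, rfl⟩ | ⟨j, rfl⟩)
    · exact (hgh j).2.2.1.coeff_eq_zero (by simpa using (hgh j).1.ne)
    · exact (hgh j).2.2.2.coeff_eq_zero (by simpa using (Nat.sub_pos_of_lt (hgh j).2.1).ne)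
  · rw [map_sum]
    refine Ideal.sum_mem _ fun j _ => ?_
    rw [pderiv_mul]
    exact add_mem (Ideal.mul_mem_left _ _ (Ideal.subset_span (by simp)))
      (Ideal.mul_mem_right _ _ (Ideal.subset_span (by simp)))

lemma le_two_mul_strength {d m : ℕ} {f : MvPolynomial σ R}
    (h : ∀ k, HasStrengthDecomp d f k → m ≤ 2 * k) : (m : ℕ∞) ≤ 2 * strength d f := by
  set S := {s : ℕ∞ | ∃ k : ℕ, s = (k : ℕ∞) ∧ HasStrengthDecomp d f k}
  rcases S.eq_empty_or_nonempty with hS | hS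
  · simp [strength, S, hS]
  · obtain ⟨k, hk, hfk⟩ := csInf_mem hS
    change _ ≤ 2 * sInf S
    rw [hk]
    exact_mod_cast h k hfk

lemma pderiv_sum_C_mul_X_pow [Fintype σ] (b : σ → R) (d : ℕ) (i : σ) :
    pderiv i (∑ j, C (b j) * X j ^ d) = C (d * b i) * X i ^ (d - 1) := by
  classical
  simp only [map_sum, pderiv_C_mul, pderiv_pow, pderiv_X, Pi.single_apply, mul_ite, mul_one,
    mul_zero, Finset.sum_ite_eq', Finset.mem_univ, if_true, C_mul, map_natCast]
  ring

theorem card_le_two_mul_strength_sum_C_mul_X_pow {K : Type*} [Field K] [Fintype σ] {d : ℕ}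
    (hd : (d : K) ≠ 0) {b : σ → K} (hb : ∀ i, b i ≠ 0) :
    (Fintype.card σ : ℕ∞) ≤ 2 * strength d (∑ j, C (b j) * X j ^ d) := by
  refine le_two_mul_strength fun k hk => ?_
  obtain ⟨t, ht, ht0, hpderiv⟩ := hk.exists_finset_pderiv_mem_span
  refine le_trans (card_le_card_of_X_pow_mem_span ht0 fun i => ⟨d - 1, ?_⟩) ht
  have hunit : C ((d : K) * b i)⁻¹ * pderiv i (∑ j, C (b j) * X j ^ d) = X i ^ (d - 1) := by
    rw [pderiv_sum_C_mul_X_pow, ← mul_assoc, ← C_mul, inv_mul_cancel₀ (mul_ne_zero hd (hb i)),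
      C_1, one_mul]
  exact hunit ▸ Ideal.mul_mem_left _ _ (hpderiv i)

end Strength

/-- For `d` odd and `a₁, …, aₙ` nonzero, the form
`a₁x₁^d + ⋯ + aₙxₙ^d − x_{n+1}^d` on `K^{n+1}` has strength at least `(n+1)/2`. -/
theorem stmt14 {K : Type*} [Field K] [CharZero K] (n d : ℕ) (hd : Odd d)
    (a : Fin n → K) (ha : ∀ i, a i ≠ 0) :
    ((n + 1 : ℕ) : ℕ∞) ≤ 2 * strength d
      ((∑ i : Fin n, MvPolynomial.C (a i) * MvPolynomial.X (Fin.castSucc i) ^ d) -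
        MvPolynomial.X (Fin.last n) ^ d : MvPolynomial (Fin (n + 1)) K) := by
  let b : Fin (n + 1) → K := Fin.snoc a (-1)
  have hdiag : (∑ i : Fin n, C (a i) * X (Fin.castSucc i) ^ d) - X (Fin.last n) ^ d =
      ∑ j, C (b j) * (X j : MvPolynomial (Fin (n + 1)) K) ^ d := by
    simp [b, Fin.sum_univ_castSucc, sub_eq_add_neg]
  have hb : ∀ j, b j ≠ 0 :=
    Fin.lastCases (by simp [b]) fun i => by simpa [b] using ha i
  rw [hdiag]
  simpa using card_le_two_mul_strength_sum_C_mul_X_pow (Nat.cast_ne_zero.mpr hd.pos.ne') hb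
end
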